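/- arXiv:2012.08596 — 3 statements merged into one kernel-verified Lean document; each statement's English description precedes it below -/
import Mathlib

section
/- Fix t ∈ [0,T] and a bounded Lipschitz continuous function φ ∈ C^∞(ℝ^d). Define w(x,s) := φ(Φ(x,s,t)) for (x,s) ∈ ℝ^d × [0,t]. Then w is Lipschitz continuous in (x,s), satisfies w(x,t) = φ(x) for all x, and satisfies the transport equation w_s(y,s) + ⟨D_xw(y,s), b(y,s)⟩ = 0 at almost every (y,s) ∈ ℝ^d × (0,t). -/
open MeasureTheory Real Set
open Filter Topology
open scoped NNReal ENNReal

noncomputable section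

/-- The state space `ℝ^d`. -/
abbrev EucS (d : ℕ) := EuclideanSpace ℝ (Fin d)

/-- Integrability of the integrand in the flow equation, via a junk-value bootstrap. -/
theorem flow_integrand_integrable
    (d : ℕ) (M : ℝ)
    (b : EucS d → ℝ → EucS d)
    (hbc : Continuous fun z : EucS d × ℝ => b z.1 z.2)
    (hbM : ∀ x t, ‖b x t‖ ≤ M)
    (Φ : EucS d → ℝ → ℝ → EucS d)
    (hΦ : ∀ x t s, t ≤ s → Φ x t s = x + ∫ σ in t..s, b (Φ x t σ) σ)
    (x : EucS d) (t s : ℝ) (hts : t ≤ s) :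
    IntervalIntegrable (fun σ => b (Φ x t σ) σ) volume t s := by
  set F : ℝ → EucS d := fun σ => b (Φ x t σ) σ with hF
  by_contra hcon
  set N : Set ℝ := {u | t ≤ u ∧ ¬ IntervalIntegrable F volume t u} with hN
  have hsN : s ∈ N := ⟨hts, hcon⟩
  have hNne : N.Nonempty := ⟨s, hsN⟩
  have hNbdd : BddBelow N := ⟨t, fun u hu => hu.1⟩
  set c : ℝ := sInf N with hc
  -- every u > c with t ≤ u is non-integrable
  have hgt : ∀ u, t ≤ u → c < u → ¬ IntervalIntegrable F volume t u := by
    intro u htu hcu hint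
    obtain ⟨u', hu'N, hu'lt⟩ := (csInf_lt_iff hNbdd hNne).1 hcu
    exact hu'N.2 (hint.mono_set (by
      rw [uIcc_of_le hu'N.1, uIcc_of_le htu]
      exact Icc_subset_Icc le_rfl hu'lt.le))
  -- hence Φ x t u = x for u > c, t ≤ u
  have hflat : ∀ u, t ≤ u → c < u → Φ x t u = x := by
    intro u htu hcu
    rw [hΦ x t u htu, intervalIntegral.integral_undef (hgt u htu hcu), add_zero]
  -- F is a.e. strongly measurable on Ioc t s
  have hcov : Ioc t s ⊆ (Ioc t s ∩ Ioi c) ∪ ({c} ∪ ⋃ n : ℕ, Ioc t (c - 1/(n+1))) := by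
    intro σ hσ
    rcases lt_trichotomy c σ with h | h | h
    · exact Or.inl ⟨hσ, h⟩
    · exact Or.inr (Or.inl (by simp [h]))
    · refine Or.inr (Or.inr ?_)
      obtain ⟨n, hn⟩ := exists_nat_one_div_lt (show (0:ℝ) < c - σ by linarith)
      exact mem_iUnion.2 ⟨n, hσ.1, by push_cast at hn ⊢; linarith⟩
  have hmeas : AEStronglyMeasurable F (volume.restrict (Ioc t s)) := by
    refine AEStronglyMeasurable.mono_measure ?_ (Measure.restrict_mono hcov le_rfl)
    rw [union_comm]
    rw [aestronglyMeasurable_union_iff]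
    constructor
    · rw [aestronglyMeasurable_union_iff]
      constructor
      · exact aestronglyMeasurable_zero_measure F |>.mono_measure (by simp)
      · rw [aestronglyMeasurable_iUnion_iff]
        intro n
        rcases le_or_gt t (c - 1/(n+1)) with h | h
        · have hlt : c - 1/(n+1:ℝ) < c := by
            have : (0:ℝ) < 1/(n+1) := by positivity
            linarith
          have hnm : c - 1/(n+1:ℝ) ∉ N := fun hmem => absurd (csInf_le hNbdd hmem) (not_le.2 hlt)
          have hint : IntervalIntegrable F volume t (c - 1/(n+1)) := by
            by_contra hh; exact hnm ⟨h, hh⟩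
          exact ((intervalIntegrable_iff_integrableOn_Ioc_of_le h).1 hint).aestronglyMeasurable
        · rw [Ioc_eq_empty (not_lt.2 h.le), Measure.restrict_empty]
          exact aestronglyMeasurable_zero_measure F
    · -- on Ioc t s ∩ Ioi c, F equals the continuous function σ ↦ b x σ
      have hc' : Continuous fun σ : ℝ => b x σ := hbc.comp (continuous_const.prodMk continuous_id)
      refine (hc'.aestronglyMeasurable (μ := volume.restrict (Ioc t s ∩ Ioi c))).congr ?_
      rw [Filter.EventuallyEq, ae_restrict_iff' (measurableSet_Ioc.inter measurableSet_Ioi)]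
      filter_upwards with σ hσ
      rw [hF]; simp only
      rw [hflat σ hσ.1.1.le hσ.2]
  -- bounded + a.e. measurable on a finite measure set ⇒ integrable
  have hvol : volume (Ioc t s) < ⊤ := measure_Ioc_lt_top
  have : IntegrableOn F (Ioc t s) volume := by
    refine ⟨hmeas, HasFiniteIntegral.restrict_of_bounded (C := M) hvol ?_⟩
    filter_upwards with σ using hbM _ _
  exact hcon ((intervalIntegrable_iff_integrableOn_Ioc_of_le hts).2 this)

/-- The flow is `M`-Lipschitz in the terminal time. -/
theorem flow_time_lipschitz
    (d : ℕ) (M : ℝ)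
    (b : EucS d → ℝ → EucS d)
    (hbc : Continuous fun z : EucS d × ℝ => b z.1 z.2)
    (hbM : ∀ x t, ‖b x t‖ ≤ M)
    (Φ : EucS d → ℝ → ℝ → EucS d)
    (hΦ : ∀ x t s, t ≤ s → Φ x t s = x + ∫ σ in t..s, b (Φ x t σ) σ)
    (x : EucS d) (t : ℝ) {u v : ℝ} (htu : t ≤ u) (htv : t ≤ v) :
    ‖Φ x t u - Φ x t v‖ ≤ M * |u - v| := by
  have h1 : Φ x t u - Φ x t v = ∫ σ in v..u, b (Φ x t σ) σ := by
    rw [hΦ x t u htu, hΦ x t v htv]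
    have := intervalIntegral.integral_interval_sub_left
      (flow_integrand_integrable d M b hbc hbM Φ hΦ x t u htu)
      (flow_integrand_integrable d M b hbc hbM Φ hΦ x t v htv)
    rw [← this]; abel
  rw [h1]
  exact intervalIntegral.norm_integral_le_of_norm_le_const (fun σ _ => hbM _ _)

theorem flow_continuousOn
    (d : ℕ) (M : ℝ)
    (b : EucS d → ℝ → EucS d)
    (hbc : Continuous fun z : EucS d × ℝ => b z.1 z.2)
    (hbM : ∀ x t, ‖b x t‖ ≤ M)
    (Φ : EucS d → ℝ → ℝ → EucS d)
    (hΦ : ∀ x t s, t ≤ s → Φ x t s = x + ∫ σ in t..s, b (Φ x t σ) σ)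
    (x : EucS d) (t : ℝ) :
    ContinuousOn (Φ x t) (Ici t) := by
  have hM0 : 0 ≤ M := le_trans (norm_nonneg _) (hbM x t)
  have : LipschitzOnWith M.toNNReal (Φ x t) (Ici t) := by
    apply LipschitzOnWith.of_dist_le_mul
    intro u hu v hv
    rw [dist_eq_norm, dist_eq_norm, Real.coe_toNNReal M hM0]
    calc ‖Φ x t u - Φ x t v‖ ≤ M * |u - v| := flow_time_lipschitz d M b hbc hbM Φ hΦ x t hu hv
      _ = M * ‖u - v‖ := by rw [Real.norm_eq_abs]
  exact this.continuousOn

theorem flow_integrand_continuousOn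
    (d : ℕ) (M : ℝ)
    (b : EucS d → ℝ → EucS d)
    (hbc : Continuous fun z : EucS d × ℝ => b z.1 z.2)
    (hbM : ∀ x t, ‖b x t‖ ≤ M)
    (Φ : EucS d → ℝ → ℝ → EucS d)
    (hΦ : ∀ x t s, t ≤ s → Φ x t s = x + ∫ σ in t..s, b (Φ x t σ) σ)
    (x : EucS d) (t : ℝ) :
    ContinuousOn (fun σ => b (Φ x t σ) σ) (Ici t) := by
  have h1 : ContinuousOn (fun σ => ((Φ x t σ : EucS d), σ)) (Ici t) :=
    (flow_continuousOn d M b hbc hbM Φ hΦ x t).prodMk continuousOn_id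
  exact hbc.comp_continuousOn h1

theorem flow_hasDerivWithinAt
    (d : ℕ) (M : ℝ)
    (b : EucS d → ℝ → EucS d)
    (hbc : Continuous fun z : EucS d × ℝ => b z.1 z.2)
    (hbM : ∀ x t, ‖b x t‖ ≤ M)
    (Φ : EucS d → ℝ → ℝ → EucS d)
    (hΦ : ∀ x t s, t ≤ s → Φ x t s = x + ∫ σ in t..s, b (Φ x t σ) σ)
    (x : EucS d) (t : ℝ) {σ : ℝ} (htσ : t ≤ σ) :
    HasDerivWithinAt (Φ x t) (b (Φ x t σ) σ) (Ici σ) σ := by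
  have hint : ∀ u, t ≤ u → IntervalIntegrable (fun τ => b (Φ x t τ) τ) volume t u :=
    fun u hu => flow_integrand_integrable d M b hbc hbM Φ hΦ x t u hu
  have hFc := flow_integrand_continuousOn d M b hbc hbM Φ hΦ x t
  have hmeas : StronglyMeasurableAtFilter (fun τ => b (Φ x t τ) τ) (𝓝[>] σ) volume := by
    refine ⟨Icc σ (σ+1), ?_, ?_⟩
    · exact nhdsWithin_mono σ Ioi_subset_Ici_self (by
        rw [show Icc σ (σ+1) = Ici σ ∩ Iic (σ+1) by rw [Ici_inter_Iic]]
        exact Filter.inter_mem self_mem_nhdsWithin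
          (mem_nhdsWithin_of_mem_nhds (Iic_mem_nhds (by linarith))))
    · exact ((hFc.mono (Icc_subset_Ici_self.trans (Ici_subset_Ici.2 htσ))).aestronglyMeasurable
        measurableSet_Icc)
  have hcw : ContinuousWithinAt (fun τ => b (Φ x t τ) τ) (Ioi σ) σ :=
    ((hFc.mono (Ici_subset_Ici.2 htσ)) σ (le_refl σ)).mono Ioi_subset_Ici_self
  have hd : HasDerivWithinAt (fun u => ∫ τ in t..u, b (Φ x t τ) τ)
      (b (Φ x t σ) σ) (Ici σ) σ :=
    intervalIntegral.integral_hasDerivWithinAt_right (hint σ htσ) hmeas hcw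
  have : HasDerivWithinAt (fun u => x + ∫ τ in t..u, b (Φ x t τ) τ)
      (b (Φ x t σ) σ) (Ici σ) σ := hd.const_add x
  refine this.congr_of_mem (fun u hu => ?_) (mem_Ici.2 le_rfl)
  exact hΦ x t u (le_trans htσ hu)


theorem flow_init (d : ℕ)
    (b : EucS d → ℝ → EucS d)
    (Φ : EucS d → ℝ → ℝ → EucS d)
    (hΦ : ∀ x t s, t ≤ s → Φ x t s = x + ∫ σ in t..s, b (Φ x t σ) σ)
    (x : EucS d) (t : ℝ) : Φ x t t = x := by
  rw [hΦ x t t le_rfl, intervalIntegral.integral_same, add_zero]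

theorem flow_space_lipschitz
    (d : ℕ) (M L : ℝ) (hL : 0 < L)
    (b : EucS d → ℝ → EucS d)
    (hbc : Continuous fun z : EucS d × ℝ => b z.1 z.2)
    (hbM : ∀ x t, ‖b x t‖ ≤ M)
    (hbL : ∀ x y t, ‖b x t - b y t‖ ≤ L * ‖x - y‖)
    (Φ : EucS d → ℝ → ℝ → EucS d)
    (hΦ : ∀ x t s, t ≤ s → Φ x t s = x + ∫ σ in t..s, b (Φ x t σ) σ)
    (x x' : EucS d) {s u : ℝ} (hsu : s ≤ u) :
    dist (Φ x s u) (Φ x' s u) ≤ dist x x' * exp (L * (u - s)) := by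
  have hv : ∀ τ : ℝ, LipschitzWith L.toNNReal (fun z => b z τ) := by
    intro τ
    apply LipschitzWith.of_dist_le_mul
    intro p q
    rw [dist_eq_norm, dist_eq_norm, Real.coe_toNNReal L hL.le]
    exact hbL p q τ
  have h := dist_le_of_trajectories_ODE (v := fun τ z => b z τ) (a := s) (b := u) hv
    ((flow_continuousOn d M b hbc hbM Φ hΦ x s).mono Icc_subset_Ici_self)
    (fun τ hτ => flow_hasDerivWithinAt d M b hbc hbM Φ hΦ x s hτ.1)
    ((flow_continuousOn d M b hbc hbM Φ hΦ x' s).mono Icc_subset_Ici_self)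
    (fun τ hτ => flow_hasDerivWithinAt d M b hbc hbM Φ hΦ x' s hτ.1)
    (by rw [flow_init d b Φ hΦ x s, flow_init d b Φ hΦ x' s])
    u ⟨hsu, le_rfl⟩
  rwa [Real.coe_toNNReal L hL.le] at h

theorem flow_semigroup
    (d : ℕ) (M L : ℝ) (hL : 0 < L)
    (b : EucS d → ℝ → EucS d)
    (hbc : Continuous fun z : EucS d × ℝ => b z.1 z.2)
    (hbM : ∀ x t, ‖b x t‖ ≤ M)
    (hbL : ∀ x y t, ‖b x t - b y t‖ ≤ L * ‖x - y‖)
    (Φ : EucS d → ℝ → ℝ → EucS d)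
    (hΦ : ∀ x t s, t ≤ s → Φ x t s = x + ∫ σ in t..s, b (Φ x t σ) σ)
    (x : EucS d) {s u t : ℝ} (hsu : s ≤ u) (hut : u ≤ t) :
    Φ (Φ x s u) u t = Φ x s t := by
  have hv : ∀ τ : ℝ, LipschitzOnWith L.toNNReal (fun z => b z τ) univ := by
    intro τ
    apply LipschitzWith.lipschitzOnWith
    apply LipschitzWith.of_dist_le_mul
    intro p q
    rw [dist_eq_norm, dist_eq_norm, Real.coe_toNNReal L hL.le]
    exact hbL p q τ
  have h := ODE_solution_unique_of_mem_Icc_right (v := fun τ z => b z τ)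
    (s := fun _ => univ) (b := t) (fun τ _ => hv τ)
    ((flow_continuousOn d M b hbc hbM Φ hΦ (Φ x s u) u).mono Icc_subset_Ici_self)
    (fun τ hτ => flow_hasDerivWithinAt d M b hbc hbM Φ hΦ (Φ x s u) u hτ.1)
    (fun _ _ => mem_univ _)
    ((flow_continuousOn d M b hbc hbM Φ hΦ x s).mono
      ((Icc_subset_Icc_left hsu).trans Icc_subset_Ici_self))
    (fun τ hτ => flow_hasDerivWithinAt d M b hbc hbM Φ hΦ x s (le_trans hsu hτ.1))
    (fun _ _ => mem_univ _)
    (by rw [flow_init d b Φ hΦ])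
  exact h ⟨hut, le_rfl⟩

theorem flow_full_lipschitz
    (d : ℕ) (M L T : ℝ) (hL : 0 < L)
    (b : EucS d → ℝ → EucS d)
    (hbc : Continuous fun z : EucS d × ℝ => b z.1 z.2)
    (hbM : ∀ x t, ‖b x t‖ ≤ M)
    (hbL : ∀ x y t, ‖b x t - b y t‖ ≤ L * ‖x - y‖)
    (Φ : EucS d → ℝ → ℝ → EucS d)
    (hΦ : ∀ x t s, t ≤ s → Φ x t s = x + ∫ σ in t..s, b (Φ x t σ) σ)
    (x x' : EucS d) {s s' t : ℝ} (h0s : 0 ≤ s) (h0s' : 0 ≤ s')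
    (hst : s ≤ t) (hs't : s' ≤ t) (htT : t ≤ T) :
    dist (Φ x s t) (Φ x' s' t) ≤ exp (L * T) * (dist x x' + M * |s - s'|) := by
  have hM0 : 0 ≤ M := le_trans (norm_nonneg _) (hbM x 0)
  have key : ∀ (y y' : EucS d) (u u' : ℝ), 0 ≤ u → u ≤ u' → u' ≤ t →
      dist (Φ y u t) (Φ y' u' t) ≤ exp (L * T) * (dist y y' + M * |u - u'|) := by
    intro y y' u u' h0u huu' hu't
    have hexp : exp (L * (t - u')) ≤ exp (L * T) := by
      apply exp_le_exp.2
      have h0u' : 0 ≤ u' := le_trans h0u huu'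
      nlinarith
    have hexp0 : 0 < exp (L * (t - u')) := exp_pos _
    have h1 : Φ y u t = Φ (Φ y u u') u' t :=
      (flow_semigroup d M L hL b hbc hbM hbL Φ hΦ y huu' hu't).symm
    calc dist (Φ y u t) (Φ y' u' t)
        = dist (Φ (Φ y u u') u' t) (Φ y' u' t) := by rw [h1]
      _ ≤ dist (Φ y u u') y' * exp (L * (t - u')) :=
          flow_space_lipschitz d M L hL b hbc hbM hbL Φ hΦ _ _ hu't
      _ ≤ (M * |u - u'| + dist y y') * exp (L * (t - u')) := by
          apply mul_le_mul_of_nonneg_right _ hexp0.le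
          calc dist (Φ y u u') y' ≤ dist (Φ y u u') (Φ y u u) + dist (Φ y u u) y' :=
                dist_triangle _ _ _
            _ ≤ M * |u' - u| + dist y y' := by
                apply add_le_add
                · rw [dist_eq_norm]
                  exact flow_time_lipschitz d M b hbc hbM Φ hΦ y u huu' le_rfl
                · rw [flow_init d b Φ hΦ]
            _ = M * |u - u'| + dist y y' := by rw [abs_sub_comm]
      _ ≤ (M * |u - u'| + dist y y') * exp (L * T) := by
          apply mul_le_mul_of_nonneg_left hexp (by positivity)
      _ = exp (L * T) * (dist y y' + M * |u - u'|) := by ring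
  rcases le_total s s' with h | h
  · exact key x x' s s' h0s h hs't
  · have := key x' x s' s h0s' h hst
    rw [dist_comm (Φ x s t), dist_comm x]
    calc dist (Φ x' s' t) (Φ x s t) ≤ exp (L*T) * (dist x' x + M * |s' - s|) := this
      _ = exp (L*T) * (dist x' x + M * |s - s'|) := by rw [abs_sub_comm]


/-- Fix `t ∈ [0,T]` and a bounded Lipschitz `φ ∈ C^∞(ℝ^d)`, and set
`w(x,s) := φ(Φ(x,s,t))` for `(x,s) ∈ ℝ^d × [0,t]`. Then `w` is Lipschitz continuous in
`(x,s)`, `w(x,t) = φ(x)`, and `w_s(y,s) + ⟨D_xw(y,s), b(y,s)⟩ = 0` at almost every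
`(y,s) ∈ ℝ^d × (0,t)`. -/
theorem transport_of_flow_composition
    (d : ℕ) (M L T : ℝ) (hM : 0 < M) (hL : 0 < L) (hT : 0 < T)
    (b : EucS d → ℝ → EucS d)
    (hbc : Continuous fun z : EucS d × ℝ => b z.1 z.2)
    (hbM : ∀ x t, ‖b x t‖ ≤ M)
    (hbL : ∀ x y t, ‖b x t - b y t‖ ≤ L * ‖x - y‖)
    (Φ : EucS d → ℝ → ℝ → EucS d)
    (hΦ : ∀ x t s, t ≤ s → Φ x t s = x + ∫ σ in t..s, b (Φ x t σ) σ)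
    (t : ℝ) (ht : t ∈ Icc (0:ℝ) T)
    (φ : EucS d → ℝ) (hφ : ContDiff ℝ (⊤ : ℕ∞) φ)
    (Cφ : ℝ) (hφb : ∀ x, |φ x| ≤ Cφ) (Kφ : ℝ≥0) (hφL : LipschitzWith Kφ φ)
    (w : EucS d × ℝ → ℝ) (hw : ∀ x s, w (x, s) = φ (Φ x s t)) :
    -- w is Lipschitz continuous in (x,s) on ℝ^d × [0,t]
    (∃ K' : ℝ, ∀ x x' : EucS d, ∀ s ∈ Icc (0:ℝ) t, ∀ s' ∈ Icc (0:ℝ) t,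
      |w (x, s) - w (x', s')| ≤ K' * (‖x - x'‖ + |s - s'|)) ∧
    -- w(x,t) = φ(x)
    (∀ x : EucS d, w (x, t) = φ x) ∧
    -- the transport equation w_s + ⟨D_x w, b⟩ = 0 a.e. in ℝ^d × (0,t)
    (∀ᵐ z : EucS d × ℝ
        ∂((volume : Measure (EucS d × ℝ)).restrict (univ ×ˢ Ioo (0:ℝ) t)),
      DifferentiableAt ℝ w z ∧ fderiv ℝ w z (b z.1 z.2, 1) = 0) := by
  have hM0 : 0 ≤ M := hM.le
  obtain ⟨ht0, htT⟩ := ht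
  -- the key Lipschitz bound for Φ towards terminal time t, on [0,t]
  have hΦlip : ∀ (x x' : EucS d) (s s' : ℝ), s ∈ Icc (0:ℝ) t → s' ∈ Icc (0:ℝ) t →
      dist (Φ x s t) (Φ x' s' t) ≤ exp (L * T) * (dist x x' + M * |s - s'|) :=
    fun x x' s s' hs hs' =>
      flow_full_lipschitz d M L T hL b hbc hbM hbL Φ hΦ x x' hs.1 hs'.1 hs.2 hs'.2 htT
  refine ⟨⟨(Kφ : ℝ) * exp (L * T) * (1 + M), ?_⟩, ?_, ?_⟩
  · intro x x' s hs s' hs'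
    have h1 : |w (x, s) - w (x', s')| ≤ (Kφ : ℝ) * dist (Φ x s t) (Φ x' s' t) := by
      rw [hw, hw, ← Real.dist_eq]
      exact hφL.dist_le_mul _ _
    have h2 := hΦlip x x' s s' hs hs'
    have h3 : dist x x' + M * |s - s'| ≤ (1 + M) * (‖x - x'‖ + |s - s'|) := by
      rw [dist_eq_norm]
      have h4 : (0:ℝ) ≤ ‖x - x'‖ := norm_nonneg _
      have h5 : (0:ℝ) ≤ |s - s'| := abs_nonneg _
      nlinarith
    calc |w (x, s) - w (x', s')| ≤ (Kφ : ℝ) * dist (Φ x s t) (Φ x' s' t) := h1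
      _ ≤ (Kφ : ℝ) * (exp (L * T) * ((1 + M) * (‖x - x'‖ + |s - s'|))) := by
          apply mul_le_mul_of_nonneg_left _ Kφ.coe_nonneg
          refine h2.trans ?_
          exact mul_le_mul_of_nonneg_left h3 (exp_pos _).le
      _ = (Kφ : ℝ) * exp (L * T) * (1 + M) * (‖x - x'‖ + |s - s'|) := by ring
  · intro x
    rw [hw, flow_init d b Φ hΦ]
  · -- the transport equation
    set proj : ℝ → ℝ := fun σ => max 0 (min σ t) with hproj
    set W : EucS d × ℝ → ℝ := fun z => φ (Φ z.1 (proj z.2) t) with hW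
    have hprojmem : ∀ σ, proj σ ∈ Icc (0:ℝ) t := fun σ =>
      ⟨le_max_left _ _, max_le ht0 (min_le_right _ _)⟩
    have hprojlip : ∀ a b' : ℝ, |proj a - proj b'| ≤ |a - b'| := by
      intro a b'
      calc |proj a - proj b'| = |max (min a t) 0 - max (min b' t) 0| := by
            rw [hproj]; simp only [max_comm]
        _ ≤ |min a t - min b' t| := abs_max_sub_max_le_abs _ _ _
        _ ≤ max |a - b'| |t - t| := abs_min_sub_min_le_max _ _ _ _
        _ = |a - b'| := by simp
    have hWlip : LipschitzWith ((Kφ : ℝ) * exp (L * T) * (1 + M)).toNNReal W := by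
      apply LipschitzWith.of_dist_le_mul
      intro z z'
      rw [Real.coe_toNNReal _ (by positivity), Real.dist_eq, hW]
      simp only
      have h1 : |φ (Φ z.1 (proj z.2) t) - φ (Φ z'.1 (proj z'.2) t)|
          ≤ (Kφ : ℝ) * dist (Φ z.1 (proj z.2) t) (Φ z'.1 (proj z'.2) t) := by
        rw [← Real.dist_eq]; exact hφL.dist_le_mul _ _
      have h2 := hΦlip z.1 z'.1 (proj z.2) (proj z'.2) (hprojmem _) (hprojmem _)
      have h3 : dist z.1 z'.1 ≤ dist z z' := by rw [Prod.dist_eq]; exact le_max_left _ _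
      have h4 : |proj z.2 - proj z'.2| ≤ dist z z' :=
        le_trans (hprojlip _ _) (by rw [← Real.dist_eq, Prod.dist_eq]; exact le_max_right _ _)
      have h5 : (0:ℝ) ≤ dist z z' := dist_nonneg
      calc |φ (Φ z.1 (proj z.2) t) - φ (Φ z'.1 (proj z'.2) t)|
          ≤ (Kφ : ℝ) * (exp (L*T) * (dist z.1 z'.1 + M * |proj z.2 - proj z'.2|)) :=
            h1.trans (mul_le_mul_of_nonneg_left h2 Kφ.coe_nonneg)
        _ ≤ (Kφ : ℝ) * (exp (L*T) * (dist z z' + M * dist z z')) := by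
            apply mul_le_mul_of_nonneg_left _ Kφ.coe_nonneg
            apply mul_le_mul_of_nonneg_left _ (exp_pos _).le
            have := mul_le_mul_of_nonneg_left h4 hM0
            linarith
        _ = (Kφ : ℝ) * exp (L*T) * (1 + M) * dist z z' := by ring
    have hHaar : (volume : Measure (EucS d × ℝ)).IsAddHaarMeasure := by
      rw [Measure.volume_eq_prod]; infer_instance
    have hWd : ∀ᵐ z ∂(volume : Measure (EucS d × ℝ)), DifferentiableAt ℝ W z :=
      hWlip.ae_differentiableAt
    have hmeas_set : MeasurableSet ((univ : Set (EucS d)) ×ˢ Ioo (0:ℝ) t) :=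
      (isOpen_univ.prod isOpen_Ioo).measurableSet
    have h1 := ae_restrict_of_ae (μ := (volume : Measure (EucS d × ℝ)))
      (s := (univ : Set (EucS d)) ×ˢ Ioo (0:ℝ) t) hWd
    have h2 := ae_restrict_mem (μ := (volume : Measure (EucS d × ℝ))) hmeas_set
    filter_upwards [h1, h2] with z hdiff hmem
    obtain ⟨y, s⟩ := z
    have hs : s ∈ Ioo (0:ℝ) t := hmem.2
    -- W agrees with w on the open set
    have hveq : ∀ z' ∈ (univ : Set (EucS d)) ×ˢ Ioo (0:ℝ) t, w z' = W z' := by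
      rintro ⟨x', σ⟩ ⟨-, hσ⟩
      rw [hW]
      simp only
      rw [show w (x', σ) = φ (Φ x' σ t) from hw x' σ]
      congr 2
      rw [hproj]
      simp only
      rw [min_eq_left hσ.2.le, max_eq_right hσ.1.le]
    have heq : w =ᶠ[𝓝 (y, s)] W :=
      Filter.eventually_iff_exists_mem.2 ⟨_, (isOpen_univ.prod isOpen_Ioo).mem_nhds hmem, hveq⟩
    have hdw : DifferentiableAt ℝ w (y, s) := (heq.differentiableAt_iff).2 hdiff
    have hfde : fderiv ℝ w (y, s) = fderiv ℝ W (y, s) := heq.fderiv_eq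
    refine ⟨hdw, ?_⟩
    -- the characteristic curve
    set g : ℝ → EucS d × ℝ := fun h => (Φ y s (s + h), s + h) with hg
    have hg0 : g 0 = (y, s) := by
      rw [hg]; simp only [add_zero]
      rw [flow_init d b Φ hΦ]
    have hinner : HasDerivWithinAt (fun h : ℝ => s + h) 1 (Ici 0) 0 :=
      (hasDerivWithinAt_id 0 (Ici 0)).const_add s
    have hΦder : HasDerivWithinAt (Φ y s) (b y s) (Ici s) s := by
      have := flow_hasDerivWithinAt d M b hbc hbM Φ hΦ y s (le_refl s)
      rwa [flow_init d b Φ hΦ] at this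
    have hcurve : HasDerivWithinAt (fun h : ℝ => Φ y s (s + h)) (b y s) (Ici 0) 0 := by
      have hmaps : MapsTo (fun h : ℝ => s + h) (Ici 0) (Ici s) := fun h hh => by
        simp only [mem_Ici] at hh ⊢; linarith
      have := HasDerivWithinAt.scomp_of_eq (x := (0:ℝ)) hΦder hinner hmaps (by simp)
      rw [one_smul] at this
      exact this
    have hγ : HasDerivWithinAt g ((b y s, 1) : EucS d × ℝ) (Ici 0) 0 := hcurve.prodMk hinner
    have hcomp : HasDerivWithinAt (w ∘ g) (fderiv ℝ w (y, s) ((b y s, 1) : EucS d × ℝ))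
        (Ici 0) 0 := by
      have hfd : HasFDerivAt w (fderiv ℝ w (y, s)) (g 0) := by
        rw [hg0]; exact hdw.hasFDerivAt
      exact hfd.comp_hasDerivWithinAt 0 hγ
    have hconst : ∀ h ∈ Icc (0:ℝ) (t - s), (w ∘ g) h = w (y, s) := by
      intro h hh
      have hsh : s ≤ s + h := by linarith [hh.1]
      have hsht : s + h ≤ t := by linarith [hh.2]
      rw [Function.comp_apply, hg]
      simp only
      rw [hw, flow_semigroup d M L hL b hbc hbM hbL Φ hΦ y hsh hsht, hw]
    have hzero : HasDerivWithinAt (w ∘ g) 0 (Ici 0) 0 := by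
      have hmem' : Icc (0:ℝ) (t - s) ∈ 𝓝[Ici 0] 0 := by
        rw [show Icc (0:ℝ) (t-s) = Ici 0 ∩ Iic (t-s) by rw [Ici_inter_Iic]]
        exact Filter.inter_mem self_mem_nhdsWithin
          (mem_nhdsWithin_of_mem_nhds (Iic_mem_nhds (by linarith [hs.2])))
      refine (hasDerivWithinAt_const 0 (Ici 0) (w (y, s))).congr_of_eventuallyEq ?_ ?_
      · filter_upwards [hmem'] with h hh
        exact hconst h hh
      · exact hconst 0 ⟨le_rfl, by linarith [hs.2]⟩
    have := UniqueDiffWithinAt.eq_deriv (Ici (0:ℝ))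
      (uniqueDiffOn_Ici 0 0 self_mem_Ici) hcomp hzero
    simpa using this
end
end

section
/- Let U ⊂ ℝ^d and let π : U → ℝ be Lipschitz continuous. Suppose that for every y ∈ U there exists δ > 0 such that Φ(y,0,σ) ∈ U and π(Φ(y,0,σ)) = π(y) - σ for all σ ∈ [0,δ). Then at every point x ∈ U at which π is differentiable, ‖∇π(x)‖ ≥ 1/M. -/
/-! If `π` is differentiable at `x` and drops at unit rate along the flow line through `x`,
whose speed is at most `M`, then `σ = π x - π (Φ x 0 σ) ≤ ‖∇π x‖ M σ + o(σ)` as `σ → 0⁺`,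
so `1 ≤ M ‖∇π x‖`. -/

open MeasureTheory Real Set
open scoped NNReal
open Filter Topology

noncomputable section

theorem HasFDerivAt.one_le_mul_norm_of_descent_along {E : Type*} [NormedAddCommGroup E]
    [NormedSpace ℝ E] {f : E → ℝ} {f' : E →L[ℝ] ℝ} {x : E} (hf : HasFDerivAt f f' x)
    {γ : ℝ → E} {M : ℝ} (hγ : ∀ᶠ σ in 𝓝[>] 0, ‖γ σ - x‖ ≤ M * σ)
    (hdesc : ∀ᶠ σ in 𝓝[>] 0, f (γ σ) = f x - σ) : 1 ≤ M * ‖f'‖ := by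
  have hγx : Tendsto γ (𝓝[>] 0) (𝓝 x) := by
    have hMσ : Tendsto (fun σ : ℝ => M * σ) (𝓝[>] 0) (𝓝 0) := by
      simpa using ((continuous_const_mul M).tendsto 0).mono_left nhdsWithin_le_nhds
    exact tendsto_iff_norm_sub_tendsto_zero.2 <|
      squeeze_zero' (Eventually.of_forall fun _ => norm_nonneg _) hγ hMσ
  have hle_add : ∀ ε > 0, 1 ≤ M * (‖f'‖ + ε) := by
    intro ε hε
    have hlin := hγx.eventually (hf.isLittleO.def hε)
    obtain ⟨σ, hσ : 0 < σ, hγσ, hdescσ, hlinσ⟩ :=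
      (eventually_mem_nhdsWithin.and (hγ.and (hdesc.and hlin))).exists
    have hdrop : σ ≤ (‖f'‖ + ε) * ‖γ σ - x‖ := calc
      σ = ‖f (γ σ) - f x‖ := by rw [hdescσ, sub_sub_cancel_left, norm_neg, norm_of_nonneg hσ.le]
      _ ≤ ‖f (γ σ) - f x - f' (γ σ - x)‖ + ‖f' (γ σ - x)‖ := norm_le_norm_sub_add _ _
      _ ≤ ε * ‖γ σ - x‖ + ‖f'‖ * ‖γ σ - x‖ := add_le_add hlinσ (f'.le_opNorm _)
      _ = (‖f'‖ + ε) * ‖γ σ - x‖ := by ring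
    have : σ ≤ σ * (M * (‖f'‖ + ε)) := calc
      σ ≤ (‖f'‖ + ε) * (M * σ) := hdrop.trans (by gcongr)
      _ = σ * (M * (‖f'‖ + ε)) := by ring
    exact le_of_mul_le_mul_left (by rwa [mul_one]) hσ
  have hlim : Tendsto (fun ε => M * (‖f'‖ + ε)) (𝓝[>] 0) (𝓝 (M * ‖f'‖)) := by
    simpa using (((continuous_const.add continuous_id).const_mul M).tendsto 0).mono_left
      nhdsWithin_le_nhds
  exact ge_of_tendsto hlim (eventually_nhdsWithin_of_forall hle_add)

theorem gradient_lower_bound_along_flow_general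
    (d : ℕ) (M : ℝ) (hM : 0 < M)
    (b : EucS d → ℝ → EucS d)
    (hbM : ∀ x t, ‖b x t‖ ≤ M)
    (Φ : EucS d → ℝ → ℝ → EucS d)
    (hΦ : ∀ x t s, t ≤ s → Φ x t s = x + ∫ σ in t..s, b (Φ x t σ) σ)
    (U : Set (EucS d)) (pit : EucS d → ℝ)
    (hflow : ∀ y ∈ U, ∃ δ > 0, ∀ σ, 0 ≤ σ → σ < δ →
      Φ y 0 σ ∈ U ∧ pit (Φ y 0 σ) = pit y - σ) :
    ∀ x ∈ U, DifferentiableAt ℝ pit x → 1 / M ≤ ‖gradient pit x‖ := by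
  intro x hx hdiff
  obtain ⟨δ, hδ, hδflow⟩ := hflow x hx
  have hspeed : ∀ σ, 0 ≤ σ → ‖Φ x 0 σ - x‖ ≤ M * σ := fun σ hσ => by
    rw [hΦ x 0 σ hσ, add_sub_cancel_left]
    simpa [abs_of_nonneg hσ] using intervalIntegral.norm_integral_le_of_norm_le_const
      (a := 0) (b := σ) fun t _ => hbM (Φ x 0 t) t
  have hdesc : ∀ᶠ σ in 𝓝[>] 0, pit (Φ x 0 σ) = pit x - σ :=
    mem_of_superset (Ioo_mem_nhdsGT hδ) fun σ hσ => (hδflow σ hσ.1.le hσ.2).2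
  have hnorm : ‖gradient pit x‖ = ‖fderiv ℝ pit x‖ :=
    (InnerProductSpace.toDual ℝ _).symm.norm_map _
  rw [hnorm, div_le_iff₀' hM]
  exact hdiff.hasFDerivAt.one_le_mul_norm_of_descent_along
    (eventually_nhdsWithin_of_forall fun σ hσ => hspeed σ (le_of_lt hσ)) hdesc

/-- Let `U ⊂ ℝ^d` and `π : U → ℝ` be Lipschitz continuous. If for every
`y ∈ U` there is `δ > 0` with `Φ(y,0,σ) ∈ U` and `π(Φ(y,0,σ)) = π(y) - σ` for all
`σ ∈ [0,δ)`, then at every `x ∈ U` at which `π` is differentiable, `‖∇π(x)‖ ≥ 1/M`. -/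
theorem gradient_lower_bound_along_flow
    (d : ℕ) (M L : ℝ) (hM : 0 < M) (hL : 0 < L)
    (b : EucS d → ℝ → EucS d)
    (hbc : Continuous fun z : EucS d × ℝ => b z.1 z.2)
    (hbM : ∀ x t, ‖b x t‖ ≤ M)
    (hbL : ∀ x y t, ‖b x t - b y t‖ ≤ L * ‖x - y‖)
    (Φ : EucS d → ℝ → ℝ → EucS d)
    (hΦ : ∀ x t s, t ≤ s → Φ x t s = x + ∫ σ in t..s, b (Φ x t σ) σ)
    (U : Set (EucS d)) (pit : EucS d → ℝ)
    (K : ℝ≥0) (hπL : LipschitzOnWith K pit U)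
    (hflow : ∀ y ∈ U, ∃ δ > 0, ∀ σ, 0 ≤ σ → σ < δ →
      Φ y 0 σ ∈ U ∧ pit (Φ y 0 σ) = pit y - σ) :
    ∀ x ∈ U, DifferentiableAt ℝ pit x → 1 / M ≤ ‖gradient pit x‖ :=
  gradient_lower_bound_along_flow_general d M hM b hbM Φ hΦ U pit hflow
end
end

section
/- For every t ≥ 0, the push-forward measure Φ(·,0,t)#m is absolutely continuous with respect to the d-dimensional Lebesgue measure, with density bounded almost everywhere by ‖ρ‖_∞ e^{dLt}. -/
/-! The flow map `x ↦ Φ x 0 t` is bi-Lipschitz with constant `exp (L t)`: Gronwall's inequality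
for the difference of two trajectories gives the Lipschitz bound, and Gronwall applied to the
time-reversed difference `σ ↦ y (t - σ) - y' (t - σ)` gives the inverse bound. An antilipschitz
self-map of `ℝ^d` with constant `K` increases `d`-dimensional Hausdorff measure, hence Lebesgue
measure, of preimages by at most the factor `K ^ d`. So the push-forward of Lebesgue measure is at
most `exp (d L t) ℒ^d`, and that of `m ≤ ‖ρ‖_∞ ℒ^d` at most `‖ρ‖_∞ exp (d L t) ℒ^d`. -/

open MeasureTheory Real Set Filter Topology Module
open scoped NNReal ENNReal

noncomputable section

theorem integrableOn_Ioc_of_forall_lt {E : Type*} [NormedAddCommGroup E] {f : ℝ → E}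
    {a b C : ℝ} (hf : ∀ s ∈ Ico a b, IntegrableOn f (Ioc a s))
    (hC : ∀ x ∈ Ioc a b, ‖f x‖ ≤ C) : IntegrableOn f (Ioc a b) := by
  rcases le_or_gt b a with hba | hab
  · simp [Ioc_eq_empty_of_le hba]
  set c : ℕ → ℝ := fun n => max a (b - 1 / (n + 1))
  have hc_mem : ∀ n, c n ∈ Ico a b := fun n =>
    ⟨le_max_left _ _, max_lt hab (sub_lt_self _ Nat.one_div_pos_of_nat)⟩
  have hc_lim : Tendsto c atTop (𝓝 b) := by
    have h := (tendsto_const_nhds (x := b)).sub tendsto_one_div_add_atTop_nhds_zero_nat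
    simpa [c, max_eq_right hab.le] using (tendsto_const_nhds (x := a)).max h
  have hC0 : 0 ≤ C := (norm_nonneg _).trans (hC b ⟨hab, le_rfl⟩)
  refine integrableOn_Ioc_of_intervalIntegral_norm_bounded_right (I := C * (b - a))
    (fun n => hf _ (hc_mem n)) hc_lim (Eventually.of_forall fun n => ?_)
  have hsub : Ioc a (c n) ⊆ Ioc a b := Ioc_subset_Ioc_right (hc_mem n).2.le
  calc ∫ x in Ioc a (c n), ‖f x‖
      ≤ ‖∫ x in Ioc a (c n), ‖f x‖‖ := le_norm_self _
    _ ≤ C * volume.real (Ioc a (c n)) :=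
        norm_setIntegral_le_of_norm_le_const measure_Ioc_lt_top
          fun x hx => by simpa using hC x (hsub hx)
    _ ≤ C * (b - a) := by
        rw [Real.volume_real_Ioc_of_le (hc_mem n).1]
        gcongr
        exact (hc_mem n).2.le

section AddHaar

variable {E : Type*} [NormedAddCommGroup E] [NormedSpace ℝ E] [FiniteDimensional ℝ E]
  [MeasurableSpace E] [BorelSpace E] (μ : Measure E) [μ.IsAddHaarMeasure] {K : ℝ≥0} {f : E → E}

theorem AntilipschitzWith.addHaar_preimage_le (hf : AntilipschitzWith K f) (s : Set E) :
    μ (f ⁻¹' s) ≤ (K : ℝ≥0∞) ^ finrank ℝ E * μ s := by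
  rw [Measure.isAddLeftInvariant_eq_smul μ μH[finrank ℝ E]]
  simp only [Measure.smul_apply, ENNReal.smul_def, smul_eq_mul]
  have hH := hf.hausdorffMeasure_preimage_le (Nat.cast_nonneg (finrank ℝ E)) s
  rw [ENNReal.rpow_natCast] at hH
  calc _ ≤ _ * ((K : ℝ≥0∞) ^ finrank ℝ E * μH[finrank ℝ E] s) := by gcongr
    _ = _ := mul_left_comm _ _ _

theorem AntilipschitzWith.map_addHaar_le (hf : AntilipschitzWith K f) (hfm : Measurable f) :
    μ.map f ≤ ((K : ℝ≥0∞) ^ finrank ℝ E) • μ := by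
  refine Measure.le_iff.2 fun s hs => ?_
  rw [Measure.map_apply hfm hs, Measure.smul_apply, smul_eq_mul]
  exact hf.addHaar_preimage_le μ s

end AddHaar

def IsIntegralSolution {E : Type*} [NormedAddCommGroup E] [NormedSpace ℝ E]
    (b : E → ℝ → E) (x : E) (y : ℝ → E) : Prop :=
  ∀ s, 0 ≤ s → y s = x + ∫ σ in (0 : ℝ)..s, b (y σ) σ

namespace IsIntegralSolution

variable {E : Type*} [NormedAddCommGroup E] [NormedSpace ℝ E]
  {b : E → ℝ → E} {x : E} {y : ℝ → E}

theorem apply_zero (h : IsIntegralSolution b x y) : y 0 = x := by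
  simpa using h 0 le_rfl

theorem intervalIntegrable {M : ℝ} (h : IsIntegralSolution b x y)
    (hbc : Continuous fun z : E × ℝ => b z.1 z.2) (hbM : ∀ x t, ‖b x t‖ ≤ M)
    {s : ℝ} (hs : 0 ≤ s) : IntervalIntegrable (fun σ => b (y σ) σ) volume 0 s := by
  rw [intervalIntegrable_iff_integrableOn_Ioc_of_le hs]
  set g : ℝ → E := fun σ => b (y σ) σ
  by_contra hs_bad
  set N : Set ℝ := {s | 0 ≤ s ∧ ¬IntegrableOn g (Ioc 0 s)}
  have hN : N.Nonempty := ⟨s, hs, hs_bad⟩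
  have hN_bdd : BddBelow N := ⟨0, fun s hs => hs.1⟩
  set T := sInf N
  have hT : 0 ≤ T := le_csInf hN fun s hs => hs.1
  have hgood : ∀ s ∈ Ico 0 T, IntegrableOn g (Ioc 0 s) := fun s hs => by
    by_contra hint
    exact notMem_of_lt_csInf hs.2 hN_bdd ⟨hs.1, hint⟩
  have hbad : ∀ s, T < s → ¬IntegrableOn g (Ioc 0 s) := fun s hs hint => by
    obtain ⟨s', ⟨-, hs'⟩, hs's⟩ := exists_lt_of_csInf_lt hN hs
    exact hs' (hint.mono_set (Ioc_subset_Ioc_right hs's.le))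
  -- past `T` the integral in the equation is `0`, so the solution is frozen at `x`
  have hfrozen : ∀ s, T < s → y s = x := fun s hs => by
    rw [h s (hT.trans hs.le), intervalIntegral.integral_of_le (hT.trans hs.le),
      integral_undef (hbad s hs), add_zero]
  have hT_good : IntegrableOn g (Ioc 0 T) :=
    integrableOn_Ioc_of_forall_lt hgood fun σ _ => hbM _ _
  have hbx : Continuous fun σ => b x σ := hbc.comp (continuous_const.prodMk continuous_id)
  have hT_succ : IntegrableOn g (Ioc T (T + 1)) :=
    hbx.integrableOn_Ioc.congr_fun
      (fun σ hσ => by simp [g, hfrozen σ hσ.1]) measurableSet_Ioc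
  refine hbad (T + 1) (lt_add_one T) ?_
  rw [← Ioc_union_Ioc_eq_Ioc hT (le_add_of_nonneg_right zero_le_one)]
  exact hT_good.union hT_succ

variable {M : ℝ} (hbc : Continuous fun z : E × ℝ => b z.1 z.2) (hbM : ∀ x t, ‖b x t‖ ≤ M)
include hbc hbM

theorem continuousOn (h : IsIntegralSolution b x y) : ContinuousOn y (Ici 0) := by
  intro s hs
  have hs1 : 0 ≤ s + 1 := by linarith [mem_Ici.1 hs]
  have hprim := intervalIntegral.continuousOn_primitive_interval'
    (h.intervalIntegrable hbc hbM hs1) left_mem_uIcc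
  rw [uIcc_of_le hs1] at hprim
  have hy : ContinuousOn y (Icc 0 (s + 1)) :=
    (continuousOn_const.add hprim).congr fun u hu => h u hu.1
  refine (hy s ⟨hs, by linarith⟩).mono_of_mem_nhdsWithin ?_
  exact mem_of_superset (inter_mem_nhdsWithin _ (Iio_mem_nhds (lt_add_one s)))
    fun u hu => ⟨hu.1, hu.2.le⟩

theorem continuousOn_velocity (h : IsIntegralSolution b x y) :
    ContinuousOn (fun σ => b (y σ) σ) (Ici 0) :=
  hbc.comp_continuousOn ((h.continuousOn hbc hbM).prodMk continuousOn_id)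

variable [CompleteSpace E]

theorem hasDerivWithinAt_Ici (h : IsIntegralSolution b x y) {s : ℝ} (hs : 0 ≤ s) :
    HasDerivWithinAt y (b (y s) s) (Ici s) s := by
  have hg := h.continuousOn_velocity hbc hbM
  have hIoi : Ioi s ⊆ Ici 0 := fun u hu => hs.trans hu.le
  have hmeas : StronglyMeasurableAtFilter (fun σ => b (y σ) σ) (𝓝[Ioi s] s) :=
    ⟨Ioi s, self_mem_nhdsWithin, (hg.mono hIoi).aestronglyMeasurable measurableSet_Ioi⟩
  have hD := (intervalIntegral.integral_hasDerivWithinAt_right (s := Ici s)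
    (h.intervalIntegrable hbc hbM hs) hmeas
    ((hg s hs).mono hIoi)).const_add x
  exact hD.congr_of_mem (fun u hu => h u (hs.trans hu)) self_mem_Ici

theorem hasDerivAt (h : IsIntegralSolution b x y) {s : ℝ} (hs : 0 < s) :
    HasDerivAt y (b (y s) s) s := by
  have hg := h.continuousOn_velocity hbc hbM
  have hnhds : Ici (0 : ℝ) ∈ 𝓝 s := Ici_mem_nhds hs
  have hD := (intervalIntegral.integral_hasDerivAt_right (h.intervalIntegrable hbc hbM hs.le)
    ⟨Ici 0, hnhds, hg.aestronglyMeasurable measurableSet_Ici⟩ (hg.continuousAt hnhds)).const_add x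
  exact hD.congr_of_eventuallyEq (eventually_of_mem hnhds fun u hu => h u hu)

variable {L : ℝ} (hbL : ∀ x y t, ‖b x t - b y t‖ ≤ L * ‖x - y‖) {x' : E} {y' : ℝ → E}
include hbL

theorem norm_sub_le (h : IsIntegralSolution b x y) (h' : IsIntegralSolution b x' y')
    {t : ℝ} (ht : 0 ≤ t) : ‖y t - y' t‖ ≤ exp (L * t) * ‖x - x'‖ := by
  have hc := h.continuousOn hbc hbM
  have hc' := h'.continuousOn hbc hbM
  have hgronwall := norm_le_gronwallBound_of_norm_deriv_right_le (ε := 0)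
    (f := fun σ => y σ - y' σ) (f' := fun σ => b (y σ) σ - b (y' σ) σ) (δ := ‖x - x'‖)
    ((hc.mono Icc_subset_Ici_self).sub (hc'.mono Icc_subset_Ici_self))
    (fun σ hσ => (h.hasDerivWithinAt_Ici hbc hbM hσ.1).sub (h'.hasDerivWithinAt_Ici hbc hbM hσ.1))
    (by simp [h.apply_zero, h'.apply_zero]) (fun σ _ => by simpa using hbL (y σ) (y' σ) σ)
    t ⟨ht, le_rfl⟩
  rwa [gronwallBound_ε0, sub_zero, mul_comm] at hgronwall

theorem norm_sub_initial_le (h : IsIntegralSolution b x y) (h' : IsIntegralSolution b x' y')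
    {t : ℝ} (ht : 0 ≤ t) : ‖x - x'‖ ≤ exp (L * t) * ‖y t - y' t‖ := by
  have hmaps : MapsTo (fun σ => t - σ) (Icc 0 t) (Ici 0) := fun σ hσ => sub_nonneg.2 hσ.2
  have hrev : ContinuousOn (fun σ : ℝ => t - σ) (Icc 0 t) := by fun_prop
  have hderiv : ∀ σ ∈ Ico 0 t, HasDerivWithinAt (fun σ => y (t - σ) - y' (t - σ))
      (b (y' (t - σ)) (t - σ) - b (y (t - σ)) (t - σ)) (Ici σ) σ := by
    intro σ hσ
    have hpos : 0 < t - σ := sub_pos.2 hσ.2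
    have hD := ((h.hasDerivAt hbc hbM hpos).sub (h'.hasDerivAt hbc hbM hpos)).scomp σ
      ((hasDerivAt_id σ).const_sub t)
    simpa [Function.comp_def] using hD.hasDerivWithinAt
  have hgronwall := norm_le_gronwallBound_of_norm_deriv_right_le (ε := 0)
    (f := fun σ => y (t - σ) - y' (t - σ)) (δ := ‖y t - y' t‖)
    (((h.continuousOn hbc hbM).comp hrev hmaps).sub ((h'.continuousOn hbc hbM).comp hrev hmaps))
    hderiv (by simp) (fun σ _ => by
      simpa [norm_sub_rev (b (y' _) _)] using hbL (y (t - σ)) (y' (t - σ)) (t - σ))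
    t ⟨ht, le_rfl⟩
  rwa [gronwallBound_ε0, sub_zero, sub_self, h.apply_zero, h'.apply_zero, mul_comm] at hgronwall

theorem lipschitzWith_flow {Φ : E → ℝ → E} (hΦ : ∀ x, IsIntegralSolution b x (Φ x)) {t : ℝ}
    (ht : 0 ≤ t) : LipschitzWith (exp (L * t)).toNNReal (Φ · t) :=
  LipschitzWith.of_dist_le_mul fun x x' => by
    simpa [dist_eq_norm, Real.coe_toNNReal _ (exp_pos _).le] using
      (hΦ x).norm_sub_le hbc hbM hbL (hΦ x') ht

theorem antilipschitzWith_flow {Φ : E → ℝ → E} (hΦ : ∀ x, IsIntegralSolution b x (Φ x))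
    {t : ℝ} (ht : 0 ≤ t) : AntilipschitzWith (exp (L * t)).toNNReal (Φ · t) :=
  AntilipschitzWith.of_le_mul_dist fun x x' => by
    simpa [dist_eq_norm, Real.coe_toNNReal _ (exp_pos _).le] using
      (hΦ x).norm_sub_initial_le hbc hbM hbL (hΦ x') ht

end IsIntegralSolution

theorem pushforward_density_bound_general
    (d : ℕ) (M L : ℝ)
    (b : EucS d → ℝ → EucS d)
    (hbc : Continuous fun z : EucS d × ℝ => b z.1 z.2)
    (hbM : ∀ x t, ‖b x t‖ ≤ M)
    (hbL : ∀ x y t, ‖b x t - b y t‖ ≤ L * ‖x - y‖)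
    (Φ : EucS d → ℝ → ℝ → EucS d)
    (hΦ : ∀ x t s, t ≤ s → Φ x t s = x + ∫ σ in t..s, b (Φ x t σ) σ)
    (ρ : EucS d → ℝ)
    (R : ℝ) (hρb : ∀ᵐ x ∂(volume : Measure (EucS d)), ρ x ≤ R)
    (m : Measure (EucS d))
    (hm : m = volume.withDensity fun x => ENNReal.ofReal (ρ x)) :
    ∀ t : ℝ, 0 ≤ t →
      Measure.map (fun x => Φ x 0 t) m ≪ (volume : Measure (EucS d)) ∧
      Measure.map (fun x => Φ x 0 t) m
        ≤ ENNReal.ofReal (R * exp (d * L * t)) • (volume : Measure (EucS d)) := by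
  intro t ht
  have hsol : ∀ x, IsIntegralSolution b x (Φ x 0) := fun x => hΦ x 0
  have hm_le : m ≤ ENNReal.ofReal R • volume := by
    rw [hm, ← withDensity_const]
    exact withDensity_mono (hρb.mono fun x hx => ENNReal.ofReal_le_ofReal hx)
  have hK : ((exp (L * t)).toNNReal : ℝ≥0∞) ^ finrank ℝ (EucS d) =
      ENNReal.ofReal (exp (d * L * t)) := by
    rw [finrank_euclideanSpace_fin, mul_assoc, Real.exp_nat_mul,
      ENNReal.ofReal_pow (exp_pos _).le]
    rfl
  have hmeas := (IsIntegralSolution.lipschitzWith_flow hbc hbM hbL hsol ht).continuous.measurable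
  have hanti := IsIntegralSolution.antilipschitzWith_flow hbc hbM hbL hsol ht
  have hmap : m.map (fun x => Φ x 0 t) ≤ ENNReal.ofReal (R * exp (d * L * t)) • volume :=
    calc m.map (fun x => Φ x 0 t)
        ≤ (ENNReal.ofReal R • volume).map (fun x => Φ x 0 t) := Measure.map_mono hm_le hmeas
      _ = ENNReal.ofReal R • volume.map (fun x => Φ x 0 t) := Measure.map_smul _ _ _
      _ ≤ ENNReal.ofReal R • (((exp (L * t)).toNNReal : ℝ≥0∞) ^ finrank ℝ (EucS d)) • volume := by
          gcongr
          exact hanti.map_addHaar_le volume hmeas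
      _ = ENNReal.ofReal (R * exp (d * L * t)) • volume := by
          rw [smul_smul, hK, ← ENNReal.ofReal_mul' (exp_pos _).le]
  exact ⟨Measure.absolutelyContinuous_of_le_smul hmap, hmap⟩

/-- For every `t ≥ 0`, the push-forward measure `Φ(·,0,t)#m` of
`m = ρ ℒ^d` is absolutely continuous with respect to the `d`-dimensional Lebesgue
measure, with density bounded a.e. by `‖ρ‖_∞ e^{dLt}`. -/
theorem pushforward_density_bound
    (d : ℕ) (M L : ℝ) (hM : 0 < M) (hL : 0 < L)
    (b : EucS d → ℝ → EucS d)
    (hbc : Continuous fun z : EucS d × ℝ => b z.1 z.2)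
    (hbM : ∀ x t, ‖b x t‖ ≤ M)
    (hbL : ∀ x y t, ‖b x t - b y t‖ ≤ L * ‖x - y‖)
    (Φ : EucS d → ℝ → ℝ → EucS d)
    (hΦ : ∀ x t s, t ≤ s → Φ x t s = x + ∫ σ in t..s, b (Φ x t σ) σ)
    (ρ : EucS d → ℝ) (hρm : Measurable ρ) (hρnn : ∀ x, 0 ≤ ρ x)
    (R : ℝ) (hρb : ∀ᵐ x ∂(volume : Measure (EucS d)), ρ x ≤ R)
    (m : Measure (EucS d))
    (hm : m = volume.withDensity fun x => ENNReal.ofReal (ρ x)) :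
    ∀ t : ℝ, 0 ≤ t →
      Measure.map (fun x => Φ x 0 t) m ≪ (volume : Measure (EucS d)) ∧
      Measure.map (fun x => Φ x 0 t) m
        ≤ ENNReal.ofReal (R * exp (d * L * t)) • (volume : Measure (EucS d)) :=
  pushforward_density_bound_general d M L b hbc hbM hbL Φ hΦ ρ R hρb m hm
end
end
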